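/- Let A be a symmetric real n×n matrix, b ∈ ℝⁿ nonzero with grade g with respect to A, and let 1 ≤ t < g. For 0 ≤ s ≤ t let p_s be a minimizer of ‖b − A p‖ over p ∈ K_s(A,b) (with p_0 = 0) and r_s := b − A p_s. If r_sᵀ A r_s > 0 for all 0 ≤ s ≤ t−1, then p_tᵀ b > p_tᵀ A p_t. -/

import Mathlib

open Matrix

/-- The Euclidean norm on `Fin n → ℝ`. -/
noncomputable def euclNorm {n : ℕ} (v : Fin n → ℝ) : ℝ := Real.sqrt (∑ i, v i ^ 2)

/-- The Krylov subspace `K_t(A,b) = span {b, Ab, …, A^{t-1} b}` (with `K_0 = {0}`). -/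
noncomputable def Krylov {n : ℕ} (A : Matrix (Fin n) (Fin n) ℝ) (b : Fin n → ℝ) (t : ℕ) :
    Submodule ℝ (Fin n → ℝ) :=
  Submodule.span ℝ (Set.range fun i : Fin t => (A ^ (i : ℕ)).mulVec b)

/-- `g` is the grade of `b` with respect to `A`. -/
def IsGrade {n : ℕ} (A : Matrix (Fin n) (Fin n) ℝ) (b : Fin n → ℝ) (g : ℕ) : Prop :=
  0 < g ∧ (∀ t : ℕ, t ≤ g → Module.finrank ℝ (Krylov A b t) = t) ∧
    (∀ t : ℕ, g < t → Module.finrank ℝ (Krylov A b t) = g)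

namespace MinresAux
variable {n : ℕ}
lemma dot_self_nonneg (v : Fin n → ℝ) : 0 ≤ v ⬝ᵥ v :=
  Finset.sum_nonneg fun i _ => mul_self_nonneg _
lemma euclNorm_def (v : Fin n → ℝ) : Real.sqrt (∑ i, v i ^ 2) = Real.sqrt (v ⬝ᵥ v) := by
  congr 1; simp [dotProduct, sq]
lemma sq_of_norm_le {v w : Fin n → ℝ}
    (h : Real.sqrt (∑ i, v i ^ 2) ≤ Real.sqrt (∑ i, w i ^ 2)) : v ⬝ᵥ v ≤ w ⬝ᵥ w := by
  rw [euclNorm_def, euclNorm_def] at h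
  exact (Real.sqrt_le_sqrt_iff (dot_self_nonneg w)).mp h
lemma symm_dot (A : Matrix (Fin n) (Fin n) ℝ) (hA : A.IsSymm) (x y : Fin n → ℝ) :
    x ⬝ᵥ A.mulVec y = A.mulVec x ⬝ᵥ y := by
  rw [Matrix.dotProduct_mulVec]
  conv_lhs => rw [← hA]
  rw [Matrix.vecMul_transpose]
lemma dot_sum {ι : Type*} (s : Finset ι) (f : ι → Fin n → ℝ) (w : Fin n → ℝ) :
    (∑ j ∈ s, f j) ⬝ᵥ w = ∑ j ∈ s, f j ⬝ᵥ w := by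
  classical
  induction s using Finset.induction with
  | empty => simp
  | insert _ _ hx ih => simp [Finset.sum_insert hx, add_dotProduct, ih]
lemma sum_dot {ι : Type*} (s : Finset ι) (f : ι → Fin n → ℝ) (w : Fin n → ℝ) :
    w ⬝ᵥ (∑ j ∈ s, f j) = ∑ j ∈ s, w ⬝ᵥ f j := by
  rw [dotProduct_comm, dot_sum]
  exact Finset.sum_congr rfl fun j _ => dotProduct_comm _ _
lemma krylov_mono (A : Matrix (Fin n) (Fin n) ℝ) (b : Fin n → ℝ) {s s' : ℕ} (h : s ≤ s') :
    Krylov A b s ≤ Krylov A b s' := by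
  apply Submodule.span_mono
  rintro _ ⟨i, rfl⟩
  exact ⟨Fin.castLE h i, rfl⟩
lemma mulVec_sum {ι : Type*} (A : Matrix (Fin n) (Fin n) ℝ) (s : Finset ι)
    (f : ι → Fin n → ℝ) : A.mulVec (∑ j ∈ s, f j) = ∑ j ∈ s, A.mulVec (f j) :=
  map_sum A.mulVecLin f s
lemma mulVec_mem_krylov (A : Matrix (Fin n) (Fin n) ℝ) (b : Fin n → ℝ) {s : ℕ}
    {q : Fin n → ℝ} (hq : q ∈ Krylov A b s) : A.mulVec q ∈ Krylov A b (s + 1) := by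
  have hmap : (Krylov A b s).map A.mulVecLin ≤ Krylov A b (s + 1) := by
    rw [Krylov, Submodule.map_span]
    apply Submodule.span_le.2
    rintro _ ⟨_, ⟨i, rfl⟩, rfl⟩
    have : A.mulVecLin ((A ^ (i : ℕ)).mulVec b) = (A ^ ((i.succ : Fin (s+1)) : ℕ)).mulVec b := by
      rw [Matrix.mulVecLin_apply, Matrix.mulVec_mulVec, Fin.val_succ, ← pow_succ']
    rw [this]
    exact Submodule.subset_span ⟨i.succ, rfl⟩
  exact hmap ⟨q, hq, rfl⟩
lemma b_mem_krylov (A : Matrix (Fin n) (Fin n) ℝ) (b : Fin n → ℝ) {s : ℕ} (h : 1 ≤ s) :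
    b ∈ Krylov A b s := by
  have := Submodule.subset_span (R := ℝ) (Set.mem_range_self (f := fun i : Fin s =>
    (A ^ (i : ℕ)).mulVec b) ⟨0, h⟩)
  simpa [Krylov] using this
lemma min_orth (A : Matrix (Fin n) (Fin n) ℝ) (b p0 : Fin n → ℝ)
    (S : Submodule ℝ (Fin n → ℝ)) (hp : p0 ∈ S)
    (hm : ∀ q ∈ S, euclNorm (b - A.mulVec p0) ≤ euclNorm (b - A.mulVec q)) :
    ∀ q ∈ S, (b - A.mulVec p0) ⬝ᵥ A.mulVec q = 0 := by
  intro q hq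
  set r : Fin n → ℝ := b - A.mulVec p0 with hr
  set u : Fin n → ℝ := A.mulVec q with hu
  set c : ℝ := r ⬝ᵥ u with hcdef
  set m : ℝ := u ⬝ᵥ u with hmdef
  have key : ∀ α : ℝ, 0 ≤ α ^ 2 * m - 2 * α * c := by
    intro α
    have hmem : p0 + α • q ∈ S := S.add_mem hp (S.smul_mem α hq)
    have h1 : r ⬝ᵥ r ≤ (b - A.mulVec (p0 + α • q)) ⬝ᵥ (b - A.mulVec (p0 + α • q)) :=
      sq_of_norm_le (hm _ hmem)
    have he : b - A.mulVec (p0 + α • q) = r - α • u := by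
      rw [Matrix.mulVec_add, Matrix.mulVec_smul, sub_add_eq_sub_sub, hr, hu]
    rw [he] at h1
    have hcomm : u ⬝ᵥ r = c := by rw [hcdef, dotProduct_comm]
    simp only [sub_dotProduct, dotProduct_sub, smul_dotProduct,
      dotProduct_smul, smul_eq_mul, ← hcdef, ← hmdef, hcomm] at h1
    nlinarith [h1]
  have hm0 : 0 ≤ m := dot_self_nonneg u
  by_contra hc
  have hm1 : (0:ℝ) < m + 1 := by linarith
  set α : ℝ := c / (m + 1) with hα
  have hαc : α * (m + 1) = c := div_mul_cancel₀ _ (ne_of_gt hm1)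
  have h0 : α = 0 := by nlinarith [key α, sq_nonneg α]
  exact hc (by rw [← hαc, h0, zero_mul])
end MinresAux

open MinresAux

/-- Let `A` be symmetric, `b ≠ 0` with grade `g`, and `1 ≤ t < g`. Let `p s`,
`0 ≤ s ≤ t`, minimize `‖b − A q‖` over `K_s(A,b)` with residuals `r_s = b − A (p s)`.
If `r_sᵀ A r_s > 0` for all `0 ≤ s ≤ t−1`, then `p_tᵀ b > p_tᵀ A p_t`. -/

theorem minres_iterate_curvature {n : ℕ} (A : Matrix (Fin n) (Fin n) ℝ) (hA : A.IsSymm)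
    (b : Fin n → ℝ) (hb : b ≠ 0) (g : ℕ) (hg : IsGrade A b g)
    (t : ℕ) (ht : 1 ≤ t) (htg : t < g)
    (p : ℕ → Fin n → ℝ)
    (hmem : ∀ s ≤ t, p s ∈ Krylov A b s)
    (hmin : ∀ s ≤ t, ∀ q ∈ Krylov A b s,
      euclNorm (b - A.mulVec (p s)) ≤ euclNorm (b - A.mulVec q))
    (hnpc : ∀ s < t, 0 < (b - A.mulVec (p s)) ⬝ᵥ A.mulVec (b - A.mulVec (p s))) :
    p t ⬝ᵥ A.mulVec (p t) < p t ⬝ᵥ b := by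
  classical
  set r : ℕ → Fin n → ℝ := fun s => b - A.mulVec (p s) with hrdef
  set N : ℕ → ℝ := fun s => r s ⬝ᵥ r s with hNdef
  -- residual orthogonality from optimality
  have horth : ∀ s ≤ t, ∀ q ∈ Krylov A b s, r s ⬝ᵥ A.mulVec q = 0 := by
    intro s hs q hq
    exact min_orth A b (p s) (Krylov A b s) (hmem s hs) (hmin s hs) q hq
  -- A p s = b - r s
  have hAps : ∀ s, A.mulVec (p s) = b - r s := by
    intro s; simp [hrdef]
  -- r s ∈ K_{s+1}
  have hrk : ∀ s ≤ t, r s ∈ Krylov A b (s + 1) := by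
    intro s hs
    exact Submodule.sub_mem _ (b_mem_krylov A b (Nat.succ_le_succ (Nat.zero_le s)))
      (mulVec_mem_krylov A b (hmem s hs))
  -- r j ⬝ᵥ b = N j
  have hdotb : ∀ j ≤ t, r j ⬝ᵥ b = N j := by
    intro j hj
    have h1 : r j ⬝ᵥ A.mulVec (p j) = 0 := horth j hj (p j) (hmem j hj)
    rw [hAps j, dotProduct_sub] at h1
    simp only [hNdef]; linarith
  -- r j ⬝ᵥ r t = N t
  have hrt : ∀ j ≤ t, r j ⬝ᵥ r t = N t := by
    intro j hj
    have hd : p t - p j ∈ Krylov A b t :=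
      Submodule.sub_mem _ (hmem t le_rfl) (krylov_mono A b hj (hmem j hj))
    have h1 : r t ⬝ᵥ A.mulVec (p t - p j) = 0 := horth t le_rfl _ hd
    have h2 : A.mulVec (p t - p j) = r j - r t := by
      rw [Matrix.mulVec_sub, hAps, hAps]; abel
    rw [h2, dotProduct_sub] at h1
    rw [dotProduct_comm]
    simp only [hNdef]; linarith
  -- conjugacy of residuals
  have hconj : ∀ j k, j < k → k ≤ t → r k ⬝ᵥ A.mulVec (r j) = 0 := by
    intro j k hjk hk
    exact horth k hk (r j) (krylov_mono A b hjk (hrk j (le_trans (le_of_lt hjk) hk)))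
  have hconj' : ∀ j k, j ≤ t → k ≤ t → j ≠ k → r j ⬝ᵥ A.mulVec (r k) = 0 := by
    intro j k hj hk hne
    rcases lt_or_gt_of_ne hne with h | h
    · rw [symm_dot A hA, dotProduct_comm]
      exact hconj j k h hk
    · exact hconj k j h hj
  -- strict decrease of N at each step s < t
  have hstep : ∀ s, s < t → N (s + 1) < N s := by
    intro s hs
    have hρ : 0 < r s ⬝ᵥ A.mulVec (r s) := hnpc s hs
    set u : Fin n → ℝ := A.mulVec (r s) with hu
    have hune : u ≠ 0 := by
      intro h
      rw [h] at hρ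
      simp at hρ
    have hm : 0 < u ⬝ᵥ u :=
      lt_of_le_of_ne (dot_self_nonneg u) (Ne.symm (fun h => hune (dotProduct_self_eq_zero.mp h)))
    set α : ℝ := (r s ⬝ᵥ u) / (u ⬝ᵥ u) with hα
    have hq : p s + α • r s ∈ Krylov A b (s + 1) :=
      Submodule.add_mem _ (krylov_mono A b (Nat.le_succ s) (hmem s (le_of_lt hs)))
        (Submodule.smul_mem _ α (hrk s (le_of_lt hs)))
    have h1 : N (s + 1) ≤ (b - A.mulVec (p s + α • r s)) ⬝ᵥ (b - A.mulVec (p s + α • r s)) :=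
      sq_of_norm_le (hmin (s + 1) hs (p s + α • r s) hq)
    have he : b - A.mulVec (p s + α • r s) = r s - α • u := by
      rw [Matrix.mulVec_add, Matrix.mulVec_smul, sub_add_eq_sub_sub, hu, hrdef]
    rw [he] at h1
    have hcomm : u ⬝ᵥ r s = r s ⬝ᵥ u := dotProduct_comm _ _
    simp only [sub_dotProduct, dotProduct_sub, smul_dotProduct,
      dotProduct_smul, smul_eq_mul, hcomm] at h1
    have hαm : α * (u ⬝ᵥ u) = r s ⬝ᵥ u := div_mul_cancel₀ _ (ne_of_gt hm)
    have hρu : 0 < r s ⬝ᵥ u := hρ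
    have hαpos : 0 < α := div_pos hρu hm
    have : N (s+1) ≤ N s - α * (r s ⬝ᵥ u) := by
      simp only [hNdef]; nlinarith [h1]
    nlinarith [mul_pos hαpos hρu]
  -- strict decrease chain
  have hchain : ∀ k ≤ t, ∀ j < k, N k < N j := by
    intro k
    induction k with
    | zero => intro _ j hj; exact absurd hj (Nat.not_lt_zero j)
    | succ k ih =>
      intro hk j hj
      have h1 : N (k + 1) < N k := hstep k (Nat.lt_of_succ_le hk)
      rcases Nat.lt_succ_iff_lt_or_eq.mp hj with h | h
      · exact h1.trans (ih (le_trans (Nat.le_succ k) hk) j h)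
      · rw [h]; exact h1
  -- linear independence of residuals r 0, ..., r (t-1)
  have hρpos : ∀ k : Fin t, 0 < r (k : ℕ) ⬝ᵥ A.mulVec (r (k : ℕ)) := fun k => hnpc k k.isLt
  have hlin : LinearIndependent ℝ (fun j : Fin t => r (j : ℕ)) := by
    rw [Fintype.linearIndependent_iff]
    intro a ha k
    have h0 : (∑ j, a j • r (j : ℕ)) ⬝ᵥ A.mulVec (r (k : ℕ)) = 0 := by
      rw [ha]; simp
    rw [dot_sum] at h0
    have hterm : ∀ j : Fin t, j ∈ Finset.univ → j ≠ k →
        (a j • r (j : ℕ)) ⬝ᵥ A.mulVec (r (k : ℕ)) = 0 := by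
      intro j _ hjk
      rw [smul_dotProduct, hconj' j k (le_of_lt j.isLt) (le_of_lt k.isLt)
        (fun h => hjk (Fin.val_injective h)), smul_eq_mul, mul_zero]
    rw [Finset.sum_eq_single k hterm (fun h => absurd (Finset.mem_univ k) h)] at h0
    rw [smul_dotProduct, smul_eq_mul] at h0
    exact (mul_eq_zero.mp h0).resolve_right (ne_of_gt (hρpos k))
  -- the residuals span K_t
  have hfinK : Module.finrank ℝ (Krylov A b t) = t := hg.2.1 t (le_of_lt htg)
  have hspan : Submodule.span ℝ (Set.range fun j : Fin t => r (j : ℕ)) = Krylov A b t := by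
    have hle : Submodule.span ℝ (Set.range fun j : Fin t => r (j : ℕ)) ≤ Krylov A b t := by
      apply Submodule.span_le.2
      rintro _ ⟨j, rfl⟩
      exact krylov_mono A b (Nat.succ_le_of_lt j.isLt) (hrk j (le_of_lt j.isLt))
    apply Submodule.eq_of_le_of_finrank_le hle
    rw [hfinK, finrank_span_eq_card hlin, Fintype.card_fin]
  -- r t ≠ 0 (grade argument)
  have hrtne : r t ≠ 0 := by
    intro h0
    have hbt : b = A.mulVec (p t) := by
      have h1 : b - A.mulVec (p t) = 0 := h0
      rwa [sub_eq_zero] at h1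
    have hmemt := hmem t le_rfl
    rw [Krylov] at hmemt
    obtain ⟨c, hc⟩ := (Submodule.mem_span_range_iff_exists_fun ℝ).mp hmemt
    have hw : LinearIndependent ℝ (fun i : Fin (t + 1) => (A ^ (i : ℕ)).mulVec b) := by
      rw [linearIndependent_iff_card_eq_finrank_span, Fintype.card_fin]
      have heq : Submodule.span ℝ (Set.range fun i : Fin (t + 1) => (A ^ (i : ℕ)).mulVec b)
          = Krylov A b (t + 1) := rfl
      rw [Set.finrank, heq, hg.2.1 (t + 1) (Nat.succ_le_of_lt htg)]
    have hdep : ∑ i : Fin (t + 1),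
        (Fin.cons (-1 : ℝ) c : Fin (t + 1) → ℝ) i • (A ^ (i : ℕ)).mulVec b = 0 := by
      rw [Fin.sum_univ_succ]
      simp only [Fin.cons_zero, Fin.cons_succ, Fin.val_succ, Fin.val_zero, pow_zero,
        Matrix.one_mulVec]
      have hpow : ∀ i : Fin t, c i • (A ^ ((i : ℕ) + 1)).mulVec b
          = A.mulVec (c i • (A ^ (i : ℕ)).mulVec b) := by
        intro i
        rw [Matrix.mulVec_smul, Matrix.mulVec_mulVec, ← pow_succ']
      rw [Finset.sum_congr rfl (fun i _ => hpow i), ← mulVec_sum, hc, ← hbt]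
      simp
    have hzero := Fintype.linearIndependent_iff.mp hw _ hdep 0
    rw [Fin.cons_zero] at hzero
    norm_num at hzero
  have hNt : 0 < N t := by
    apply lt_of_le_of_ne (dot_self_nonneg (r t))
    exact Ne.symm fun h => hrtne (dotProduct_self_eq_zero.mp h)
  -- expand p t in the residual basis
  obtain ⟨c, hc⟩ := (Submodule.mem_span_range_iff_exists_fun ℝ).mp (hspan ▸ hmem t le_rfl)
  -- coefficients are positive
  have hck : ∀ k : Fin t, 0 < c k := by
    intro k
    have hAc : A.mulVec (∑ j : Fin t, c j • r (j : ℕ))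
        = ∑ j : Fin t, c j • A.mulVec (r (j : ℕ)) := by
      rw [mulVec_sum]
      exact Finset.sum_congr rfl fun j _ => Matrix.mulVec_smul A (c j) (r (j : ℕ))
    have e1 : r (k : ℕ) ⬝ᵥ A.mulVec (p t)
        = c k * (r (k : ℕ) ⬝ᵥ A.mulVec (r (k : ℕ))) := by
      rw [← hc, hAc, sum_dot]
      rw [Finset.sum_eq_single k (fun j _ hjk => by
        rw [dotProduct_smul, hconj' k j (le_of_lt k.isLt) (le_of_lt j.isLt)
          (fun h => hjk (Fin.val_injective h.symm)), smul_eq_mul, mul_zero])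
        (fun h => absurd (Finset.mem_univ k) h)]
      rw [dotProduct_smul, smul_eq_mul]
    have e2 : r (k : ℕ) ⬝ᵥ A.mulVec (p t) = N (k : ℕ) - N t := by
      rw [hAps t, dotProduct_sub, hdotb (k : ℕ) (le_of_lt k.isLt),
        hrt (k : ℕ) (le_of_lt k.isLt)]
    have hNk : N t < N (k : ℕ) := hchain t le_rfl (k : ℕ) k.isLt
    nlinarith [hρpos k, e1.symm.trans e2]
  have hfinal : p t ⬝ᵥ r t = (∑ j : Fin t, c j) * N t := by
    rw [← hc, dot_sum, Finset.sum_mul]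
    exact Finset.sum_congr rfl fun j _ => by
      rw [smul_dotProduct, smul_eq_mul, hrt (j : ℕ) (le_of_lt j.isLt)]
  have : Nonempty (Fin t) := ⟨⟨0, ht⟩⟩
  have hsumpos : 0 < ∑ j : Fin t, c j := Finset.sum_pos (fun j _ => hck j) Finset.univ_nonempty
  have hpos : 0 < p t ⬝ᵥ r t := by rw [hfinal]; exact mul_pos hsumpos hNt
  have hsub : p t ⬝ᵥ r t = p t ⬝ᵥ b - p t ⬝ᵥ A.mulVec (p t) := dotProduct_sub _ _ _
  linarith
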